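/- Let Γ1 = (V1, E1) be a connected cubic graph containing a 2-cracker {e1, e2} with e1 = (a,b) and e2 = (c,d), where a and c lie in the same connected component of Γ1 minus {e1, e2}. Let v1, v2 be two new vertices and let ΓD be the graph with vertex set V1 ∪ {v1, v2} and edge set (E1 \ {e1, e2}) ∪ {(a,v1), (b,v1), (c,v2), (d,v2), (v1,v2)}. Then ΓD is a connected cubic graph, and {(a,v1), (c,v2)} is a 2-cracker of ΓD. -/

import Mathlib

open SimpleGraph

/-- A graph is cubic if every vertex has exactly three neighbours. -/
def IsCubic {V : Type*} (G : SimpleGraph V) : Prop :=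
  ∀ v : V, (G.neighborSet v).ncard = 3

/-- A cracker of `G`: a nonempty set of edges of `G`, no two of which share a
vertex, whose deletion disconnects `G`, while no proper subset disconnects `G`. -/
def IsCracker {V : Type*} (G : SimpleGraph V) (C : Set (Sym2 V)) : Prop :=
  C.Nonempty ∧ C ⊆ G.edgeSet ∧
    C.Pairwise (fun e f => ∀ v : V, ¬(v ∈ e ∧ v ∈ f)) ∧
    ¬(G.deleteEdges C).Connected ∧
    ∀ C' : Set (Sym2 V), C' ⊂ C → (G.deleteEdges C').Connected

/-- A `k`-cracker is a cracker consisting of `k` edges. -/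
def IsKCracker {V : Type*} (G : SimpleGraph V) (C : Set (Sym2 V)) (k : ℕ) : Prop :=
  IsCracker G C ∧ C.ncard = k

/-- The type 2 parthenogenic operation: delete the two edges (a,b), (c,d) of a
2-cracker and insert a parthenogenic bridge on two new vertices v₁, v₂ (here Fin 2)
with edges (a,v₁), (b,v₁), (c,v₂), (d,v₂), (v₁,v₂). -/
def parth2 {V₁ : Type*} (G₁ : SimpleGraph V₁) (a b c d : V₁) : SimpleGraph (V₁ ⊕ Fin 2) :=
  SimpleGraph.fromRel (fun p q =>
    (∃ x y : V₁, p = Sum.inl x ∧ q = Sum.inl y ∧ G₁.Adj x y ∧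
        s(x, y) ≠ s(a, b) ∧ s(x, y) ≠ s(c, d)) ∨
    (p = Sum.inl a ∧ q = Sum.inr 0) ∨
    (p = Sum.inl b ∧ q = Sum.inr 0) ∨
    (p = Sum.inl c ∧ q = Sum.inr 1) ∨
    (p = Sum.inl d ∧ q = Sum.inr 1) ∨
    (p = Sum.inr 0 ∧ q = Sum.inr 1))

/-! Let `H` be `G₁` with the edges `ab` and `cd` deleted. By minimality of the cracker, `ab` is a
bridge of `G₁ - cd` and `cd` is a bridge of `G₁ - ab`, so `H` has exactly two components: one
containing `a` and `c`, the other `b` and `d`. Each of the new vertices `v₁`, `v₂` therefore joins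
the two components, so deleting only one of `av₁`, `cv₂` leaves `parth2 G₁ a b c d` connected,
whereas deleting both cuts off the component of `a`. An old vertex keeps its degree because a
neighbour across a cracker edge is replaced by `v₁` or `v₂`, and `v₁`, `v₂` have degree three by
construction. -/

namespace SimpleGraph

variable {V : Type*} {G : SimpleGraph V}

lemma Reachable.imp_of_forall_adj {P : V → Prop} (hP : ∀ ⦃x y⦄, G.Adj x y → P x → P y)
    {u v : V} (h : G.Reachable u v) : P u → P v := by
  obtain ⟨p⟩ := h
  induction p with
  | nil => exact id
  | cons hxy _ ih => exact ih ∘ hP hxy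

lemma Walk.reachable_deleteEdges_or_exists (s : Set (Sym2 V)) {x y : V} (p : G.Walk x y) :
    (G.deleteEdges s).Reachable x y ∨ ∃ e ∈ s, ∃ z ∈ e, (G.deleteEdges s).Reachable x z := by
  induction p with
  | nil => exact .inl .rfl
  | @cons x y _ hxy _ ih =>
    by_cases he : s(x, y) ∈ s
    · exact .inr ⟨_, he, x, Sym2.mem_mk_left _ _, .rfl⟩
    · have hxy' : (G.deleteEdges s).Reachable x y := (deleteEdges_adj.2 ⟨hxy, he⟩).reachable
      exact ih.imp hxy'.trans fun ⟨e, he, z, hz, hyz⟩ => ⟨e, he, z, hz, hxy'.trans hyz⟩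

lemma Connected.reachable_deleteEdges_or (hG : G.Connected) (u v x : V) :
    (G.deleteEdges {s(u, v)}).Reachable u x ∨ (G.deleteEdges {s(u, v)}).Reachable v x := by
  obtain h | ⟨_, rfl, z, hz, h⟩ :=
    (hG.preconnected x u).some.reachable_deleteEdges_or_exists {s(u, v)}
  · exact .inl h.symm
  · rcases Sym2.mem_iff.1 hz with rfl | rfl
    exacts [.inl h.symm, .inr h.symm]

lemma Connected.not_reachable_deleteEdges (hG : G.Connected) {u v : V}
    (h : ¬ (G.deleteEdges {s(u, v)}).Connected) : ¬ (G.deleteEdges {s(u, v)}).Reachable u v :=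
  isBridge_iff.1 (not_not.1 (mt hG.connected_delete_edge_of_not_isBridge h))

lemma connected_of_forall_reachable_inl {W : Type*} {H : SimpleGraph V}
    {K : SimpleGraph (V ⊕ W)} (hHK : ∀ ⦃x y⦄, H.Adj x y → K.Adj (.inl x) (.inl y)) {u v : V}
    (hH : ∀ x, H.Reachable u x ∨ H.Reachable v x) (huv : K.Reachable (.inl u) (.inl v))
    (hW : ∀ w, K.Reachable (.inl u) (.inr w)) : K.Connected := by
  have lift {x y : V} (h : H.Reachable x y) : K.Reachable (.inl x) (.inl y) :=
    h.map ⟨Sum.inl, fun h => hHK h⟩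
  refine (connected_iff_exists_forall_reachable K).2 ⟨.inl u, ?_⟩
  rintro (x | w)
  · exact (hH x).elim lift fun h => huv.trans (lift h)
  · exact hW w

end SimpleGraph

section Cracker

variable {V : Type*} {G : SimpleGraph V} {e f : Sym2 V}

lemma isKCracker_pair (he : e ∈ G.edgeSet) (hf : f ∈ G.edgeSet)
    (hef : ∀ v, ¬(v ∈ e ∧ v ∈ f)) (hdis : ¬ (G.deleteEdges {e, f}).Connected)
    (hce : (G.deleteEdges {e}).Connected) (hcf : (G.deleteEdges {f}).Connected) :
    IsKCracker G {e, f} 2 := by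
  have hne : e ≠ f := by
    rintro rfl
    induction e with | h x y => exact hef x ⟨Sym2.mem_mk_left x y, Sym2.mem_mk_left x y⟩
  refine ⟨⟨Set.insert_nonempty _ _, Set.insert_subset_iff.2 ⟨he, Set.singleton_subset_iff.2 hf⟩,
    Set.pairwise_pair.2 fun _ => ⟨hef, fun v h => hef v h.symm⟩, hdis, fun C hC => ?_⟩,
    Set.ncard_pair hne⟩
  by_cases heC : e ∈ C
  · have hfC : f ∉ C := fun hfC => hC.2 (Set.insert_subset_iff.2 ⟨heC, by simpa⟩)
    exact hce.mono (deleteEdges_anti fun g hg => ((hC.1 hg).resolve_right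
      fun h => hfC (h ▸ hg)))
  · exact hcf.mono (deleteEdges_anti fun g hg => ((hC.1 hg).resolve_left
      fun h => heC (h ▸ hg)))

namespace IsKCracker

lemma ne_of_pair (h : IsKCracker G {e, f} 2) : e ≠ f := by
  rintro rfl
  simpa using h.2

lemma symm_pair (h : IsKCracker G {e, f} 2) : IsKCracker G {f, e} 2 :=
  Set.pair_comm e f ▸ h

lemma adj_of_pair {u v : V} (h : IsKCracker G {s(u, v), f} 2) : G.Adj u v :=
  h.1.2.1 (Set.mem_insert _ _)

lemma connected_deleteEdges_right (h : IsKCracker G {e, f} 2) : (G.deleteEdges {f}).Connected :=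
  h.1.2.2.2.2 {f} ⟨Set.subset_insert e {f}, fun h' => h.ne_of_pair (h' (Set.mem_insert e {f}))⟩

lemma not_reachable_left {u v : V} (h : IsKCracker G {s(u, v), f} 2) :
    ¬ (G.deleteEdges {s(u, v), f}).Reachable u v := by
  have := h.connected_deleteEdges_right.not_reachable_deleteEdges (u := u) (v := v)
  rw [deleteEdges_deleteEdges, Set.union_singleton] at this
  exact this h.1.2.2.2.1

lemma reachable_or_left {u v : V} (h : IsKCracker G {s(u, v), f} 2) (x : V) :
    (G.deleteEdges {s(u, v), f}).Reachable u x ∨ (G.deleteEdges {s(u, v), f}).Reachable v x := by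
  have := h.connected_deleteEdges_right.reachable_deleteEdges_or u v x
  rwa [deleteEdges_deleteEdges, Set.union_singleton] at this

lemma left_ne_left {u v x y : V} (h : IsKCracker G {s(u, v), s(x, y)} 2) : u ≠ x := by
  rintro rfl
  exact h.1.2.2.1 (Set.mem_insert _ _) (by simp) h.ne_of_pair u
    ⟨Sym2.mem_mk_left _ _, Sym2.mem_mk_left _ _⟩

end IsKCracker

end Cracker

section Parth2

open Sum

variable {V₁ : Type*} {G₁ : SimpleGraph V₁} {a b c d : V₁}

@[simp] lemma parth2_adj_inl_inl {x y : V₁} :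
    (parth2 G₁ a b c d).Adj (inl x) (inl y) ↔ (G₁.deleteEdges {s(a, b), s(c, d)}).Adj x y := by
  simp only [parth2, fromRel_adj, deleteEdges_adj]
  grind [Adj.ne, Adj.symm]

@[simp] lemma parth2_adj_inl_inr {x : V₁} {i : Fin 2} :
    (parth2 G₁ a b c d).Adj (inl x) (inr i) ↔
      i = 0 ∧ (x = a ∨ x = b) ∨ i = 1 ∧ (x = c ∨ x = d) := by
  simp only [parth2, fromRel_adj]
  grind

@[simp] lemma parth2_adj_inr_inl {x : V₁} {i : Fin 2} :
    (parth2 G₁ a b c d).Adj (inr i) (inl x) ↔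
      i = 0 ∧ (x = a ∨ x = b) ∨ i = 1 ∧ (x = c ∨ x = d) := by
  rw [adj_comm, parth2_adj_inl_inr]

@[simp] lemma parth2_adj_inr_inr {i j : Fin 2} :
    (parth2 G₁ a b c d).Adj (inr i) (inr j) ↔ i ≠ j := by
  simp only [parth2, fromRel_adj]
  grind

open Classical in
/-- The neighbour of `inl x` in `parth2 G₁ a b c d` that takes the place of the neighbour `y` of
`x` in `G₁`. -/
noncomputable def parth2Nbr (a b c d x y : V₁) : V₁ ⊕ Fin 2 :=
  if s(x, y) = s(a, b) then inr 0 else if s(x, y) = s(c, d) then inr 1 else inl y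

lemma parth2Nbr_injective (x : V₁) : Function.Injective (parth2Nbr a b c d x) := by
  intro y y' h
  unfold parth2Nbr at h
  split_ifs at h <;> grind [Sym2.congr_right]

lemma parth2_neighborSet_inl (hab : G₁.Adj a b) (hcd : G₁.Adj c d) (hne : s(a, b) ≠ s(c, d))
    (x : V₁) :
    (parth2 G₁ a b c d).neighborSet (inl x) = parth2Nbr a b c d x '' G₁.neighborSet x := by
  ext (y | i) <;>
    simp only [mem_neighborSet, Set.mem_image, parth2Nbr, parth2_adj_inl_inl, parth2_adj_inl_inr,
      deleteEdges_adj, Set.mem_insert_iff, Set.mem_singleton_iff, Sym2.eq_iff] <;>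
    grind [Adj.symm]

lemma parth2_neighborSet_inr_zero :
    (parth2 G₁ a b c d).neighborSet (inr 0) = {inl a, inl b, inr 1} := by
  ext (y | i)
  · simp [or_comm, eq_comm]
  · fin_cases i <;> simp

lemma parth2_neighborSet_inr_one :
    (parth2 G₁ a b c d).neighborSet (inr 1) = {inl c, inl d, inr 0} := by
  ext (y | i)
  · simp [or_comm, eq_comm]
  · fin_cases i <;> simp

lemma isCubic_parth2 (hG₁ : IsCubic G₁) (hab : G₁.Adj a b) (hcd : G₁.Adj c d)
    (hne : s(a, b) ≠ s(c, d)) : IsCubic (parth2 G₁ a b c d) := by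
  rintro (x | i)
  · rw [parth2_neighborSet_inl hab hcd hne, Set.ncard_image_of_injective _ (parth2Nbr_injective x),
      hG₁ x]
  obtain rfl | rfl : i = 0 ∨ i = 1 := by omega
  · rw [parth2_neighborSet_inr_zero]
    exact Set.ncard_eq_three.2 ⟨_, _, _, by simpa using hab.ne, by simp, by simp, rfl⟩
  · rw [parth2_neighborSet_inr_one]
    exact Set.ncard_eq_three.2 ⟨_, _, _, by simpa using hcd.ne, by simp, by simp, rfl⟩

end Parth2

section Parth2Connectivity

open Sum

variable {V₁ : Type*} {G₁ : SimpleGraph V₁} {a b c d : V₁}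

lemma connected_parth2_deleteEdges_right
    (hH : ∀ x, (G₁.deleteEdges {s(a, b), s(c, d)}).Reachable a x ∨
      (G₁.deleteEdges {s(a, b), s(c, d)}).Reachable b x) :
    ((parth2 G₁ a b c d).deleteEdges {s(inl c, inr 1)}).Connected := by
  set K := (parth2 G₁ a b c d).deleteEdges {s(inl c, inr 1)}
  have ha0 : K.Adj (inl a) (inr 0) := by simp [K]
  have hb0 : K.Adj (inl b) (inr 0) := by simp [K]
  have h01 : K.Adj (inr 0) (inr 1) := by simp [K]
  refine connected_of_forall_reachable_inl (fun x y h => ?_) hH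
    (ha0.reachable.trans hb0.reachable.symm) ?_
  · simpa [K] using h
  · rintro i
    obtain rfl | rfl : i = 0 ∨ i = 1 := by omega
    exacts [ha0.reachable, ha0.reachable.trans h01.reachable]

lemma connected_parth2_deleteEdges_left (hab : a ≠ b)
    (hac : (G₁.deleteEdges {s(a, b), s(c, d)}).Reachable a c)
    (hH : ∀ x, (G₁.deleteEdges {s(a, b), s(c, d)}).Reachable a x ∨
      (G₁.deleteEdges {s(a, b), s(c, d)}).Reachable b x) :
    ((parth2 G₁ a b c d).deleteEdges {s(inl a, inr 0)}).Connected := by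
  set K := (parth2 G₁ a b c d).deleteEdges {s(inl a, inr 0)}
  have hHK : ∀ ⦃x y⦄, (G₁.deleteEdges {s(a, b), s(c, d)}).Adj x y → K.Adj (inl x) (inl y) := by
    intro x y h
    simpa [K] using h
  have hc1 : K.Adj (inl c) (inr 1) := by simp [K]
  have hb0 : K.Adj (inl b) (inr 0) := by simp [K, Ne.symm hab]
  have h01 : K.Adj (inr 0) (inr 1) := by simp [K]
  have ha1 : K.Reachable (inl a) (inr 1) := (hac.map ⟨inl, fun h => hHK h⟩).trans hc1.reachable
  refine connected_of_forall_reachable_inl hHK hH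
    (ha1.trans (hb0.reachable.trans h01.reachable).symm) ?_
  rintro i
  obtain rfl | rfl : i = 0 ∨ i = 1 := by omega
  exacts [ha1.trans h01.reachable.symm, ha1]

lemma not_connected_parth2_deleteEdges (hab : ¬ (G₁.deleteEdges {s(a, b), s(c, d)}).Reachable a b)
    (had : ¬ (G₁.deleteEdges {s(a, b), s(c, d)}).Reachable a d) :
    ¬ ((parth2 G₁ a b c d).deleteEdges {s(inl a, inr 0), s(inl c, inr 1)}).Connected := by
  intro h
  refine (h.preconnected (inl a) (inr 0)).imp_of_forall_adj
    (P := Sum.elim ((G₁.deleteEdges {s(a, b), s(c, d)}).Reachable a) fun _ => False) ?_ .rfl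
  rintro (x | i) (y | j) hxy hx
  · exact Reachable.trans hx (parth2_adj_inl_inl.1 (deleteEdges_adj.1 hxy).1).reachable
  · obtain ⟨hxj, hC⟩ := deleteEdges_adj.1 hxy
    rcases parth2_adj_inl_inr.1 hxj with ⟨rfl, rfl | rfl⟩ | ⟨rfl, rfl | rfl⟩
    exacts [hC (by simp), hab hx, hC (by simp), had hx]
  · exact hx.elim
  · exact hx.elim

end Parth2Connectivity

theorem parth2_spec_general {V₁ : Type*} (G₁ : SimpleGraph V₁)
    (hc₁ : IsCubic G₁) (a b c d : V₁)
    (hcr : IsKCracker G₁ {s(a, b), s(c, d)} 2)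
    (hside : (G₁.deleteEdges {s(a, b), s(c, d)}).Reachable a c) :
    (parth2 G₁ a b c d).Connected ∧ IsCubic (parth2 G₁ a b c d) ∧
      IsKCracker (parth2 G₁ a b c d)
        {s(Sum.inl a, Sum.inr 0), s(Sum.inl c, Sum.inr 1)} 2 := by
  have hab := hcr.adj_of_pair
  have hcd := hcr.symm_pair.adj_of_pair
  have hsides := hcr.reachable_or_left
  have hnad : ¬ (G₁.deleteEdges {s(a, b), s(c, d)}).Reachable a d := fun had =>
    hcr.symm_pair.not_reachable_left (Set.pair_comm (s(a, b)) _ ▸ hside.symm.trans had)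
  have hconn := connected_parth2_deleteEdges_right hsides
  refine ⟨hconn.mono (deleteEdges_le _), isCubic_parth2 hc₁ hab hcd hcr.ne_of_pair,
    isKCracker_pair (by simp) (by simp) (by simp [hcr.left_ne_left])
      (not_connected_parth2_deleteEdges hcr.not_reachable_left hnad)
      (connected_parth2_deleteEdges_left hab.ne hside hsides) hconn⟩

/-- inserting a parthenogenic bridge into a 2-cracker {(a,b),(c,d)} of a
connected cubic graph, where a and c lie on the same side of the 2-cracker, yields a
connected cubic graph in which {(a,v₁),(c,v₂)} is a 2-cracker. -/
theorem parth2_spec {V₁ : Type*} (G₁ : SimpleGraph V₁)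
    (h₁ : G₁.Connected) (hc₁ : IsCubic G₁) (a b c d : V₁)
    (hcr : IsKCracker G₁ {s(a, b), s(c, d)} 2)
    (hside : (G₁.deleteEdges {s(a, b), s(c, d)}).Reachable a c) :
    (parth2 G₁ a b c d).Connected ∧ IsCubic (parth2 G₁ a b c d) ∧
      IsKCracker (parth2 G₁ a b c d)
        {s(Sum.inl a, Sum.inr 0), s(Sum.inl c, Sum.inr 1)} 2 :=
  parth2_spec_general G₁ hc₁ a b c d hcr hside
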